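/- Hulburt's boundary conditions fail to satisfy overall mass conservation: let c be a classical solution of the convection–dispersion equation on [0, ℓ] satisfying a first-type entrance condition c(t,0) = c_in(t) for all t, and suppose the overall conservation law holds with influent flux v·c_in(t) and third-type effluent flux, i.e. for every t, d/dt ∫₀^ℓ c(t,x) dx = v·c_in(t) − (v·c(t,ℓ) − D·∂x c(t,ℓ)) + ∫₀^ℓ r(t,x) dx. Then the dispersive flux at the entrance must vanish identically: ∂x c(t,0) = 0 for all t. Consequently, if ∂x c(t₀,0) ≠ 0 for some time t₀, the first-type entrance violates overall mass conservation. -/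

import Mathlib

/-!
Differentiating the mass `∫₀^ℓ c(t,x) dx` under the integral sign and integrating the CDE over the
column gives the exact balance
`d/dt ∫₀^ℓ c = (v·c(t,0) − D·∂x c(t,0)) − (v·c(t,ℓ) − D·∂x c(t,ℓ)) + ∫₀^ℓ r`,
whose influent term is the full convective–dispersive flux at the inlet. Under a first-type entrance
`c(t,0) = c_in(t)` the postulated balance differs from it exactly by `D·∂x c(t,0)`, and `D > 0`.
-/

open Set

/-- `c` is a classical solution of the convection–dispersion equation
`∂t c = D·∂xx c − v·∂x c + r` on the column `[0, ℓ]`, where `ct`, `cx`, `cxx`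
denote the partial derivatives `∂t c`, `∂x c`, `∂xx c` (one-sided in the
space variable at the endpoints), and these together with `r` are continuous
on `ℝ × [0, ℓ]`. -/
structure IsCDESolution (D v ℓ : ℝ) (c ct cx cxx r : ℝ → ℝ → ℝ) : Prop where
  hasDeriv_x : ∀ t : ℝ, ∀ x ∈ Icc (0:ℝ) ℓ, HasDerivWithinAt (c t) (cx t x) (Icc 0 ℓ) x
  hasDeriv_xx : ∀ t : ℝ, ∀ x ∈ Icc (0:ℝ) ℓ, HasDerivWithinAt (cx t) (cxx t x) (Icc 0 ℓ) x
  hasDeriv_t : ∀ x ∈ Icc (0:ℝ) ℓ, ∀ t : ℝ, HasDerivAt (fun s => c s x) (ct t x) t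
  cont_ct : ContinuousOn (Function.uncurry ct) (univ ×ˢ Icc 0 ℓ)
  cont_cx : ContinuousOn (Function.uncurry cx) (univ ×ˢ Icc 0 ℓ)
  cont_cxx : ContinuousOn (Function.uncurry cxx) (univ ×ˢ Icc 0 ℓ)
  cont_r : ContinuousOn (Function.uncurry r) (univ ×ˢ Icc 0 ℓ)
  pde : ∀ t : ℝ, ∀ x ∈ Icc (0:ℝ) ℓ, ct t x = D * cxx t x - v * cx t x + r t x

theorem intervalIntegral.integral_eq_sub_of_hasDerivWithinAt_Icc {f f' : ℝ → ℝ} {a b : ℝ}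
    (hab : a ≤ b) (hf : ∀ x ∈ Icc a b, HasDerivWithinAt f (f' x) (Icc a b) x)
    (hf' : IntervalIntegrable f' MeasureTheory.volume a b) :
    ∫ x in a..b, f' x = f b - f a :=
  integral_eq_sub_of_hasDeriv_right_of_le hab (fun x hx => (hf x hx).continuousWithinAt)
    (fun x hx => ((hf x (Ioo_subset_Icc_self hx)).hasDerivAt
      (Icc_mem_nhds hx.1 hx.2)).hasDerivWithinAt) hf'

theorem intervalIntegral.hasDerivAt_integral_of_continuousOn {E : Type*}
    [NormedAddCommGroup E] [NormedSpace ℝ E] {F F' : ℝ → ℝ → E} {a b : ℝ} (hab : a ≤ b)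
    (hF : ∀ s, ContinuousOn (F s) (Icc a b))
    (hF' : ContinuousOn (Function.uncurry F') (univ ×ˢ Icc a b))
    (hderiv : ∀ x ∈ Icc a b, ∀ s, HasDerivAt (fun s => F s x) (F' s x) s) (t : ℝ) :
    HasDerivAt (fun s => ∫ x in a..b, F s x) (∫ x in a..b, F' t x) t := by
  have hIoc : uIoc a b ⊆ Icc a b := by
    rw [uIoc_of_le hab]
    exact Ioc_subset_Icc_self
  obtain ⟨M, hM⟩ : ∃ M, ∀ p ∈ Icc (t - 1) (t + 1) ×ˢ Icc a b, ‖Function.uncurry F' p‖ ≤ M :=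
    (isCompact_Icc.prod isCompact_Icc).exists_bound_of_continuousOn
      (hF'.mono (prod_mono (subset_univ _) subset_rfl))
  refine (hasDerivAt_integral_of_dominated_loc_of_deriv_le (bound := fun _ => M)
    (Icc_mem_nhds (by linarith : t - 1 < t) (by linarith : t < t + 1))
    (Filter.Eventually.of_forall fun s =>
      ((hF s).mono hIoc).aestronglyMeasurable measurableSet_uIoc)
    ((hF t).intervalIntegrable_of_Icc hab)
    (((hF'.uncurry_left t (mem_univ t)).mono hIoc).aestronglyMeasurable measurableSet_uIoc)
    (Filter.Eventually.of_forall fun x hx s hs => hM (s, x) ⟨hs, hIoc hx⟩)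
    intervalIntegrable_const
    (Filter.Eventually.of_forall fun x hx s _ => hderiv x (hIoc hx) s)).2

namespace IsCDESolution

variable {D v ℓ : ℝ} {c ct cx cxx r : ℝ → ℝ → ℝ}

theorem integral_ct (hsol : IsCDESolution D v ℓ c ct cx cxx r) (hℓ : 0 ≤ ℓ) (t : ℝ) :
    ∫ x in (0:ℝ)..ℓ, ct t x
      = D * (cx t ℓ - cx t 0) - v * (c t ℓ - c t 0) + ∫ x in (0:ℝ)..ℓ, r t x := by
  have integrable {f : ℝ → ℝ → ℝ} (hf : ContinuousOn (Function.uncurry f) (univ ×ˢ Icc 0 ℓ)) :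
      IntervalIntegrable (f t) MeasureTheory.volume 0 ℓ :=
    (hf.uncurry_left t (mem_univ t)).intervalIntegrable_of_Icc hℓ
  have hcxx := integrable hsol.cont_cxx
  have hcx := integrable hsol.cont_cx
  have ftc_cx : ∫ x in (0:ℝ)..ℓ, cxx t x = cx t ℓ - cx t 0 :=
    intervalIntegral.integral_eq_sub_of_hasDerivWithinAt_Icc hℓ (hsol.hasDeriv_xx t) hcxx
  have ftc_c : ∫ x in (0:ℝ)..ℓ, cx t x = c t ℓ - c t 0 :=
    intervalIntegral.integral_eq_sub_of_hasDerivWithinAt_Icc hℓ (hsol.hasDeriv_x t) hcx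
  rw [intervalIntegral.integral_congr (g := fun x => D * cxx t x - v * cx t x + r t x)
      fun x hx => hsol.pde t x (by rwa [uIcc_of_le hℓ] at hx),
    intervalIntegral.integral_add ((hcxx.const_mul D).sub (hcx.const_mul v))
      (integrable hsol.cont_r),
    intervalIntegral.integral_sub (hcxx.const_mul D) (hcx.const_mul v),
    intervalIntegral.integral_const_mul, intervalIntegral.integral_const_mul, ftc_cx, ftc_c]

theorem hasDerivAt_integral (hsol : IsCDESolution D v ℓ c ct cx cxx r) (hℓ : 0 ≤ ℓ) (t : ℝ) :
    HasDerivAt (fun s => ∫ x in (0:ℝ)..ℓ, c s x)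
      ((v * c t 0 - D * cx t 0) - (v * c t ℓ - D * cx t ℓ) + ∫ x in (0:ℝ)..ℓ, r t x) t := by
  refine (intervalIntegral.hasDerivAt_integral_of_continuousOn hℓ
    (fun s x hx => (hsol.hasDeriv_x s x hx).continuousWithinAt) hsol.cont_ct hsol.hasDeriv_t
    t).congr_deriv ?_
  rw [hsol.integral_ct hℓ t]
  ring

end IsCDESolution

theorem cde_first_type_entrance_forces_zero_entrance_gradient_general
    (D v ℓ : ℝ) (hD : 0 < D) (hℓ : 0 < ℓ)
    (c ct cx cxx r : ℝ → ℝ → ℝ) (cin : ℝ → ℝ)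
    (hsol : IsCDESolution D v ℓ c ct cx cxx r)
    (hfirst : ∀ t : ℝ, c t 0 = cin t)
    (hbal : ∀ t : ℝ,
      HasDerivAt (fun s : ℝ => ∫ x in (0:ℝ)..ℓ, c s x)
        (v * cin t - (v * c t ℓ - D * cx t ℓ) + ∫ x in (0:ℝ)..ℓ, r t x) t) :
    ∀ t : ℝ, cx t 0 = 0 := by
  intro t
  have hfluxes := (hbal t).unique (hsol.hasDerivAt_integral hℓ.le t)
  rw [hfirst t] at hfluxes
  have hdispersive : D * cx t 0 = 0 := by linarith
  exact (mul_eq_zero.mp hdispersive).resolve_left hD.ne'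

/-- Hulburt's conditions fail overall mass conservation: if a classical
solution of the CDE has a first-type entrance `c(t,0) = c_in(t)` and the
overall conservation law holds with influent flux `v·c_in(t)` and third-type
effluent flux, then the dispersive flux at the entrance must vanish
identically, `∂x c(t,0) = 0`; consequently if `∂x c(t₀,0) ≠ 0` at some time,
the first-type entrance violates overall mass conservation. -/
theorem cde_first_type_entrance_forces_zero_entrance_gradient
    (D v ℓ : ℝ) (hD : 0 < D) (hv : 0 < v) (hℓ : 0 < ℓ)
    (c ct cx cxx r : ℝ → ℝ → ℝ) (cin : ℝ → ℝ)
    (hsol : IsCDESolution D v ℓ c ct cx cxx r)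
    (hfirst : ∀ t : ℝ, c t 0 = cin t)
    (hbal : ∀ t : ℝ,
      HasDerivAt (fun s : ℝ => ∫ x in (0:ℝ)..ℓ, c s x)
        (v * cin t - (v * c t ℓ - D * cx t ℓ) + ∫ x in (0:ℝ)..ℓ, r t x) t) :
    ∀ t : ℝ, cx t 0 = 0 :=
  cde_first_type_entrance_forces_zero_entrance_gradient_general D v ℓ hD hℓ c ct cx cxx r cin hsol
    hfirst hbal
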